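/- arXiv:1705.09218 — 2 statements merged into one kernel-verified Lean document; each statement's English description precedes it below -/
import Mathlib

section
/- If S, S' are closed subsets of the rotation poset corresponding to stable matchings M, M' with S ⊆ S', then the distance d(M, M') equals the number of men involved in at least one rotation of the difference set S' \ S. -/
/-- A stable-marriage instance with `n` men and `n` women: each man `m` ranks the
women via `mrank m` (lower rank = more preferred), each woman `w` ranks the men
via `wrank w`; rankings are strict, i.e. injective. -/
structure SMInst (n : ℕ) where
  mrank : Fin n → Fin n → ℕ
  wrank : Fin n → Fin n → ℕ
  mrank_inj : ∀ m, Function.Injective (mrank m)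
  wrank_inj : ∀ w, Function.Injective (wrank w)

namespace SMInst

variable {n : ℕ} (I : SMInst n)

/-- A matching is a bijection from men to women; the pair `(m, w)` blocks `M` if `m`
strictly prefers `w` to his partner `M m` and `w` strictly prefers `m` to her partner. -/
def Blocks (M : Fin n ≃ Fin n) (m w : Fin n) : Prop :=
  I.mrank m w < I.mrank m (M m) ∧ I.wrank w m < I.wrank w (M.symm w)

/-- A matching is stable iff it admits no blocking pair. -/
def IsStable (M : Fin n ≃ Fin n) : Prop :=
  ∀ m w, ¬ I.Blocks M m w

/-- `M₁ ⪯ M₂` : every man weakly prefers his partner in `M₁` to his partner in `M₂`. -/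
def Dominates (M₁ M₂ : Fin n ≃ Fin n) : Prop :=
  ∀ m, I.mrank m (M₁ m) ≤ I.mrank m (M₂ m)

/-- The man-optimal stable matching (the output of men-proposing Gale–Shapley):
stable and dominating every stable matching. -/
def IsManOptimal (M₀ : Fin n ≃ Fin n) : Prop :=
  I.IsStable M₀ ∧ ∀ M, I.IsStable M → I.Dominates M₀ M

/-- The woman-optimal (man-pessimal) stable matching. -/
def IsWomanOptimal (Mz : Fin n ≃ Fin n) : Prop :=
  I.IsStable Mz ∧ ∀ M, I.IsStable M → I.Dominates M Mz

/-- `d(M, M')` : the number of men with different partners in `M` and `M'`. -/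
def mdist (M M' : Fin n ≃ Fin n) : ℕ :=
  let _ := I
  (Finset.univ.filter fun m => M m ≠ M' m).card

/-- `L` is a rotation exposed in `M`: a cyclic list of at least two pairs `(mᵢ, wᵢ)` of `M`
with distinct men, such that `w_{i+1}` is the first woman strictly below `wᵢ` on `mᵢ`'s
list who prefers `mᵢ` to her `M`-partner. -/
def ExposedIn (M : Fin n ≃ Fin n) (L : List (Fin n × Fin n)) : Prop :=
  2 ≤ L.length ∧ (L.map Prod.fst).Nodup ∧ (∀ p ∈ L, M p.1 = p.2) ∧
  ∀ i : Fin L.length,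
    I.mrank (L.get i).1 (L.get i).2 <
      I.mrank (L.get i).1 (L.get ⟨(i.1 + 1) % L.length, Nat.mod_lt _ i.pos⟩).2 ∧
    I.wrank (L.get ⟨(i.1 + 1) % L.length, Nat.mod_lt _ i.pos⟩).2 (L.get i).1 <
      I.wrank (L.get ⟨(i.1 + 1) % L.length, Nat.mod_lt _ i.pos⟩).2
        (L.get ⟨(i.1 + 1) % L.length, Nat.mod_lt _ i.pos⟩).1 ∧
    ∀ w, I.mrank (L.get i).1 (L.get i).2 < I.mrank (L.get i).1 w →
      I.mrank (L.get i).1 w <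
        I.mrank (L.get i).1 (L.get ⟨(i.1 + 1) % L.length, Nat.mod_lt _ i.pos⟩).2 →
      ¬ I.wrank w (L.get i).1 < I.wrank w (M.symm w)

/-- `M'` is obtained from `M` by eliminating the rotation `L` exposed in `M`:
each man `mᵢ` of `L` moves to `w_{i+1}`, all other men keep their partners. -/
def Elim (M M' : Fin n ≃ Fin n) (L : List (Fin n × Fin n)) : Prop :=
  I.ExposedIn M L ∧
  (∀ i : Fin L.length,
    M' (L.get i).1 = (L.get ⟨(i.1 + 1) % L.length, Nat.mod_lt _ i.pos⟩).2) ∧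
  ∀ m : Fin n, m ∉ L.map Prod.fst → M' m = M m

/-- `ElimSeq M Ls M'` : applying the rotations of `Ls` in order starting from `M` yields `M'`. -/
def ElimSeq : (Fin n ≃ Fin n) → List (List (Fin n × Fin n)) → (Fin n ≃ Fin n) → Prop
  | M, [], M' => M' = M
  | M, L :: Ls, M' => ∃ Mmid, I.Elim M Mmid L ∧ ElimSeq Mmid Ls M'

/-- A rotation of the instance: a cyclic list exposed in some stable matching. -/
def IsRotation (L : List (Fin n × Fin n)) : Prop :=
  ∃ M, I.IsStable M ∧ I.ExposedIn M L

/-- `ρ' ≪ ρ` : `ρ'` is eliminated in every sequence of rotation eliminations starting at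
the man-optimal matching `M₀` and ending at a stable matching in which `ρ` is exposed.
(Rotations are identified up to their sets of pairs.) -/
def Precedes (L' L : List (Fin n × Fin n)) : Prop :=
  ∀ M₀ Ls M, I.IsManOptimal M₀ → I.ElimSeq M₀ Ls M → I.IsStable M → I.ExposedIn M L →
    ∃ K ∈ Ls, K.toFinset = L'.toFinset

/-- The rotation `L` produces the pair `(m, w)` : eliminating `L` matches `m` to `w`. -/
def Produces (L : List (Fin n × Fin n)) (m w : Fin n) : Prop :=
  let _ := I
  ∃ i : Fin L.length,
    (L.get i).1 = m ∧ (L.get ⟨(i.1 + 1) % L.length, Nat.mod_lt _ i.pos⟩).2 = w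

/-- The set of rotations of the instance, identified with their sets of pairs. -/
def RotSet : Set (Finset (Fin n × Fin n)) :=
  {R | ∃ L, I.IsRotation L ∧ L.toFinset = R}

/-- Precedence of rotations, on rotations-as-sets-of-pairs. -/
def PrecedesR (R' R : Finset (Fin n × Fin n)) : Prop :=
  ∃ L' L, I.IsRotation L' ∧ I.IsRotation L ∧ L'.toFinset = R' ∧ L.toFinset = R ∧
    I.Precedes L' L

/-- Closed subsets (down-sets) of the rotation poset. -/
def IsClosedF (S : Finset (Finset (Fin n × Fin n))) : Prop :=
  (∀ R ∈ S, R ∈ I.RotSet) ∧ ∀ R ∈ S, ∀ R' ∈ I.RotSet, I.PrecedesR R' R → R' ∈ S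

/-- `X(T)` : the set of men involved in at least one rotation of `T`. -/
def menOf (T : Finset (Finset (Fin n × Fin n))) : Finset (Fin n) :=
  let _ := I
  T.biUnion fun R => R.image Prod.fst

/-- The stable matching corresponding to the closed subset `S`: obtained from `M₀` by
eliminating the rotations of `S`, each exactly once, in some valid order. -/
def Corresponds (M₀ : Fin n ≃ Fin n) (S : Finset (Finset (Fin n × Fin n)))
    (M : Fin n ≃ Fin n) : Prop :=
  ∃ Ls : List (List (Fin n × Fin n)),
    (Ls.map List.toFinset).Nodup ∧ (Ls.map List.toFinset).toFinset = S ∧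
    I.ElimSeq M₀ Ls M

/-! ### Auxiliary development -/

lemma pw_unique {L : List (Fin n × Fin n)} (hnd : (L.map Prod.fst).Nodup)
    {m w w' : Fin n} (h : (m, w) ∈ L) (h' : (m, w') ∈ L) : w = w' := by
  have := List.inj_on_of_nodup_map hnd h h' rfl
  exact congrArg Prod.snd this

lemma produces_unique {L : List (Fin n × Fin n)} (hnd : (L.map Prod.fst).Nodup)
    {m a b : Fin n} (ha : I.Produces L m a) (hb : I.Produces L m b) : a = b := by
  obtain ⟨i, him, hia⟩ := ha
  obtain ⟨j, hjm, hjb⟩ := hb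
  have hij : i = j := by
    have h1 : (L.map Prod.fst).get ⟨i.1, by simpa using i.2⟩ =
        (L.map Prod.fst).get ⟨j.1, by simpa using j.2⟩ := by
      simp only [List.get_eq_getElem, List.getElem_map]
      show (L.get i).1 = (L.get j).1
      rw [him, hjm]
    have h2 := (List.Nodup.get_inj_iff hnd).mp h1
    exact Fin.ext (by simpa using congrArg Fin.val h2)
  subst hij
  rw [← hia, ← hjb]

/-- All the consequences of exposure, for the pair `(m, w) ∈ L`. -/
lemma exposed_produces {N : Fin n ≃ Fin n} {L : List (Fin n × Fin n)} {m w : Fin n}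
    (hE : I.ExposedIn N L) (hp : (m, w) ∈ L) :
    ∃ a m' : Fin n, I.Produces L m a ∧ (m', a) ∈ L ∧ I.mrank m w < I.mrank m a ∧
      I.wrank a m < I.wrank a m' ∧
      ∀ u, I.mrank m w < I.mrank m u → I.mrank m u < I.mrank m a →
        ¬ I.wrank u m < I.wrank u (N.symm u) := by
  obtain ⟨i, hi⟩ := List.mem_iff_get.mp hp
  have hcond := hE.2.2.2 i
  rw [hi] at hcond
  refine ⟨(L.get ⟨(i.1 + 1) % L.length, Nat.mod_lt _ i.pos⟩).2,
      (L.get ⟨(i.1 + 1) % L.length, Nat.mod_lt _ i.pos⟩).1,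
      ⟨i, by rw [hi], rfl⟩, ?_, ?_, ?_, ?_⟩
  · exact L.get_mem _
  · exact hcond.1
  · exact hcond.2.1
  · intro u h1 h2
    exact hcond.2.2 u h1 h2

lemma rank_lt_of_produces {N : Fin n ≃ Fin n} {L : List (Fin n × Fin n)} {m w v : Fin n}
    (hE : I.ExposedIn N L) (hp : (m, w) ∈ L) (hv : I.Produces L m v) :
    I.mrank m w < I.mrank m v := by
  obtain ⟨a, m', ha, _, hlt, _, _⟩ := I.exposed_produces hE hp
  rwa [I.produces_unique hE.2.1 ha hv] at hlt

lemma produces_not_lt {N N' : Fin n ≃ Fin n} {K K' : List (Fin n × Fin n)}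
    (hA : I.ExposedIn N K) (hB : I.ExposedIn N' K')
    (hT : K.toFinset = K'.toFinset) {m w a b : Fin n}
    (hpK : (m, w) ∈ K) (ha : I.Produces K m a) (hb : I.Produces K' m b) :
    ¬ I.mrank m a < I.mrank m b := by
  intro hab
  have hpK' : (m, w) ∈ K' := by
    rw [← List.mem_toFinset, ← hT, List.mem_toFinset]; exact hpK
  obtain ⟨a₀, ma, ha₀, hma, hltA, hwA, _⟩ := I.exposed_produces hA hpK
  obtain ⟨b₀, mb, hb₀, hmb, hltB, hwB, hbetB⟩ := I.exposed_produces hB hpK'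
  have haa : a₀ = a := I.produces_unique hA.2.1 ha₀ ha
  have hbb : b₀ = b := I.produces_unique hB.2.1 hb₀ hb
  rw [← haa, ← hbb] at hab
  have hmaK' : (ma, a₀) ∈ K' := by
    rw [← List.mem_toFinset, ← hT, List.mem_toFinset]; exact hma
  have hNa : N'.symm a₀ = ma := by
    have := hB.2.2.1 _ hmaK'
    exact N'.symm_apply_eq.mpr this.symm
  exact hbetB a₀ hltA hab (hNa ▸ hwA)

/-- A rotation exposed anywhere, with the same set of pairs, produces the same
woman for each of its men. -/
lemma produces_eq_of_toFinset_eq {N N' : Fin n ≃ Fin n} {K K' : List (Fin n × Fin n)}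
    (hA : I.ExposedIn N K) (hB : I.ExposedIn N' K')
    (hT : K.toFinset = K'.toFinset) {m w a b : Fin n}
    (hpK : (m, w) ∈ K) (ha : I.Produces K m a) (hb : I.Produces K' m b) : a = b := by
  have hpK' : (m, w) ∈ K' := by
    rw [← List.mem_toFinset, ← hT, List.mem_toFinset]; exact hpK
  have h1 := I.produces_not_lt hA hB hT hpK ha hb
  have h2 := I.produces_not_lt hB hA hT.symm hpK' hb ha
  by_contra hne
  rcases lt_or_gt_of_ne (fun e => hne (I.mrank_inj m e)) with h | h
  · exact h1 h
  · exact h2 h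

/-- The trace of a single man through a sequence of rotations. -/
def MChain (m : Fin n) : Fin n → List (List (Fin n × Fin n)) → Fin n → Prop
  | w, [], w' => w' = w
  | w, K :: T, w' => (m, w) ∈ K ∧ (∃ N, I.ExposedIn N K) ∧
      ∃ v, I.Produces K m v ∧ MChain m v T w'

lemma elimSeq_mchain {N N₂ : Fin n ≃ Fin n} {Ls : List (List (Fin n × Fin n))}
    (h : I.ElimSeq N Ls N₂) (m : Fin n) :
    I.MChain m (N m) (Ls.filter fun K => m ∈ K.map Prod.fst) (N₂ m) := by
  induction Ls generalizing N with
  | nil =>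
      simp only [ElimSeq] at h
      subst h; simp [MChain]
  | cons L Ls ih =>
      obtain ⟨Mmid, hElim, hSeq⟩ := h
      by_cases hm : m ∈ L.map Prod.fst
      · rw [List.filter_cons_of_pos (by simpa using hm)]
        obtain ⟨p, hpL, hfst⟩ := List.mem_map.mp hm
        have hw : (m, p.2) ∈ L := by rw [← hfst]; exact hpL
        have hNm : N m = p.2 := hElim.1.2.2.1 _ hw
        obtain ⟨i, hi⟩ := List.mem_iff_get.mp hw
        refine ⟨by rw [hNm]; exact hw, ⟨N, hElim.1⟩, Mmid m, ⟨i, by rw [hi], ?_⟩, ?_⟩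
        · have := hElim.2.1 i
          rw [hi] at this
          exact this.symm
        · exact ih hSeq
      · rw [List.filter_cons_of_neg (by simpa using hm)]
        have hMm : Mmid m = N m := hElim.2.2 m hm
        have := ih hSeq
        rwa [hMm] at this

lemma mchain_rank_le {m w w' : Fin n} {T : List (List (Fin n × Fin n))}
    (h : I.MChain m w T w') :
    I.mrank m w ≤ I.mrank m w' ∧ (T ≠ [] → I.mrank m w < I.mrank m w') := by
  induction T generalizing w with
  | nil => simp only [MChain] at h; subst h; simp
  | cons K T ih =>
      obtain ⟨hp, ⟨N, hE⟩, v, hv, hch⟩ := h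
      have h1 : I.mrank m w < I.mrank m v := I.rank_lt_of_produces hE hp hv
      have h2 := (ih hch).1
      exact ⟨le_of_lt (lt_of_lt_of_le h1 h2), fun _ => lt_of_lt_of_le h1 h2⟩

lemma mchain_pw_rank {m w w' : Fin n} {T : List (List (Fin n × Fin n))}
    (h : I.MChain m w T w') :
    ∀ K ∈ T, ∀ u, (m, u) ∈ K → I.mrank m w ≤ I.mrank m u := by
  induction T generalizing w with
  | nil => simp
  | cons K T ih =>
      obtain ⟨hp, ⟨N, hE⟩, v, hv, hch⟩ := h
      intro K' hK' u hu
      rcases List.mem_cons.mp hK' with hh | hh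
      · subst hh
        rw [pw_unique hE.2.1 hp hu]
      · have h1 : I.mrank m w < I.mrank m v := I.rank_lt_of_produces hE hp hv
        exact le_of_lt (lt_of_lt_of_le h1 (ih hch K' hh u hu))

/-- Key comparison lemma : two chains from the same starting woman, whose rotation
sets are nested, end at the same woman iff the sets coincide; otherwise the larger
chain ends strictly worse. -/
lemma mchain_compare {m : Fin n} :
    ∀ (T' T : List (List (Fin n × Fin n))) (w₀ e e' : Fin n),
      I.MChain m w₀ T e → I.MChain m w₀ T' e' →
      (∀ R ∈ T.map List.toFinset, R ∈ T'.map List.toFinset) →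
      ((∀ R ∈ T'.map List.toFinset, R ∈ T.map List.toFinset) → e = e') ∧
      ((∃ R ∈ T'.map List.toFinset, R ∉ T.map List.toFinset) →
        I.mrank m e < I.mrank m e') := by
  intro T'
  induction T' with
  | nil =>
      intro T w₀ e e' hT hT' hsub
      have hTnil : T = [] := by
        cases T with
        | nil => rfl
        | cons K T => exact absurd (hsub K.toFinset (by simp)) (by simp)
      subst hTnil
      simp only [MChain] at hT hT'
      subst hT; subst hT'
      exact ⟨fun _ => rfl, by simp⟩
  | cons K' rest' ih =>
      intro T w₀ e e' hT hT' hsub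
      obtain ⟨hpK', ⟨N', hE'⟩, v', hv', hch'⟩ := hT'
      cases T with
      | nil =>
          simp only [MChain] at hT
          subst hT
          refine ⟨fun hall => absurd (hall K'.toFinset (by simp)) (by simp), fun _ => ?_⟩
          have h1 : I.mrank m e < I.mrank m v' := I.rank_lt_of_produces hE' hpK' hv'
          exact lt_of_lt_of_le h1 (I.mchain_rank_le hch').1
      | cons K rest =>
          obtain ⟨hpK, ⟨N, hE⟩, v, hv, hch⟩ := hT
          have hstrict : I.mrank m w₀ < I.mrank m v := I.rank_lt_of_produces hE hpK hv
          have hstrict' : I.mrank m w₀ < I.mrank m v' := I.rank_lt_of_produces hE' hpK' hv'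
          obtain ⟨K'', hK''mem, hKeq⟩ := List.mem_map.mp (hsub K.toFinset (by simp))
          have hpK'' : (m, w₀) ∈ K'' := by
            rw [← List.mem_toFinset, hKeq, List.mem_toFinset]; exact hpK
          have hhead : K.toFinset = K'.toFinset := by
            rcases List.mem_cons.mp hK''mem with hh | hh
            · rw [← hKeq, hh]
            · exact absurd (I.mchain_pw_rank hch' K'' hh w₀ hpK'')
                (not_le.mpr hstrict')
          have hvv : v = v' := I.produces_eq_of_toFinset_eq hE hE' hhead hpK hv hv'
          subst hvv
          -- no later rotation in either chain can have pair set `K.toFinset`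
          have hnotK : ∀ R ∈ rest.map List.toFinset, R ≠ K.toFinset := by
            intro R hR hRK
            obtain ⟨K₂, hK₂mem, hK₂eq⟩ := List.mem_map.mp hR
            have hmem : (m, w₀) ∈ K₂ := by
              rw [← List.mem_toFinset, hK₂eq, hRK, List.mem_toFinset]; exact hpK
            exact absurd (I.mchain_pw_rank hch K₂ hK₂mem w₀ hmem) (not_le.mpr hstrict)
          have hnotK' : ∀ R ∈ rest'.map List.toFinset, R ≠ K'.toFinset := by
            intro R hR hRK
            obtain ⟨K₂, hK₂mem, hK₂eq⟩ := List.mem_map.mp hR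
            have hmem : (m, w₀) ∈ K₂ := by
              rw [← List.mem_toFinset, hK₂eq, hRK, List.mem_toFinset]; exact hpK'
            exact absurd (I.mchain_pw_rank hch' K₂ hK₂mem w₀ hmem) (not_le.mpr hstrict')
          have hsub' : ∀ R ∈ rest.map List.toFinset, R ∈ rest'.map List.toFinset := by
            intro R hR
            have hmem : R ∈ (K' :: rest').map List.toFinset := by
              apply hsub
              simp only [List.map_cons, List.mem_cons]
              exact Or.inr hR
            rw [List.map_cons] at hmem
            rcases List.mem_cons.mp hmem with hh | hh
            · exact absurd (hh.trans hhead.symm) (hnotK R hR)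
            · exact hh
          have IH := ih rest v e e' hch hch' hsub'
          constructor
          · intro hall
            apply IH.1
            intro R hR
            have hmem : R ∈ (K :: rest).map List.toFinset := by
              apply hall
              simp only [List.map_cons, List.mem_cons]
              exact Or.inr hR
            rw [List.map_cons] at hmem
            rcases List.mem_cons.mp hmem with hh | hh
            · exact absurd (hh.trans hhead) (hnotK' R hR)
            · exact hh
          · rintro ⟨R, hR, hRn⟩
            apply IH.2
            have hR2 : R ∈ rest'.map List.toFinset := by
              rw [List.map_cons] at hR
              rcases List.mem_cons.mp hR with hh | hh
              · exfalso
                apply hRn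
                simp only [List.map_cons, List.mem_cons]
                exact Or.inl (hh.trans hhead.symm)
              · exact hh
            refine ⟨R, hR2, fun h => hRn ?_⟩
            simp only [List.map_cons, List.mem_cons]
            exact Or.inr h

end SMInst
/-- for nested closed subsets `S ⊆ S'` with corresponding matchings `M, M'`,
the distance `d(M, M')` equals the number of men involved in rotations of `S' \ S`. -/
theorem dist_eq_card_menOf_diff {n : ℕ} (I : SMInst n) (M₀ : Fin n ≃ Fin n)
    (hM₀ : I.IsManOptimal M₀) (S S' : Finset (Finset (Fin n × Fin n)))
    (M M' : Fin n ≃ Fin n) (hS : I.IsClosedF S) (hS' : I.IsClosedF S') (hsub : S ⊆ S')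
    (hM : I.IsStable M) (hM' : I.IsStable M')
    (hc : I.Corresponds M₀ S M) (hc' : I.Corresponds M₀ S' M') :
    I.mdist M M' = (I.menOf (S' \ S)).card := by
  classical
  obtain ⟨Ls, hnd, hts, hseq⟩ := hc
  obtain ⟨Ls', hnd', hts', hseq'⟩ := hc'
  have hmemS : ∀ R, R ∈ S ↔ ∃ K ∈ Ls, K.toFinset = R := by
    intro R
    rw [← hts, List.mem_toFinset, List.mem_map]
  have hmemS' : ∀ R, R ∈ S' ↔ ∃ K ∈ Ls', K.toFinset = R := by
    intro R
    rw [← hts', List.mem_toFinset, List.mem_map]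
  have key : ∀ m : Fin n, M m ≠ M' m ↔ m ∈ I.menOf (S' \ S) := by
    intro m
    have hT := I.elimSeq_mchain hseq m
    have hT' := I.elimSeq_mchain hseq' m
    set T := Ls.filter (fun K => m ∈ K.map Prod.fst) with hTdef
    set T' := Ls'.filter (fun K => m ∈ K.map Prod.fst) with hT'def
    -- membership characterizations of T, T'
    have hmemT : ∀ K, K ∈ T ↔ K ∈ Ls ∧ m ∈ K.map Prod.fst := by
      intro K; rw [hTdef, List.mem_filter]; simp
    have hmemT' : ∀ K, K ∈ T' ↔ K ∈ Ls' ∧ m ∈ K.map Prod.fst := by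
      intro K; rw [hT'def, List.mem_filter]; simp
    have hsubT : ∀ R ∈ T.map List.toFinset, R ∈ T'.map List.toFinset := by
      intro R hR
      obtain ⟨K, hK, hKeq⟩ := List.mem_map.mp hR
      obtain ⟨hKLs, hKm⟩ := (hmemT K).mp hK
      have hRS : R ∈ S := (hmemS R).mpr ⟨K, hKLs, hKeq⟩
      obtain ⟨K', hK'Ls, hK'eq⟩ := (hmemS' R).mp (hsub hRS)
      obtain ⟨p, hpK, hfst⟩ := List.mem_map.mp hKm
      have hpK' : p ∈ K' := by
        rw [← List.mem_toFinset, hK'eq, ← hKeq, List.mem_toFinset]; exact hpK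
      have hK'm : m ∈ K'.map Prod.fst := List.mem_map.mpr ⟨p, hpK', hfst⟩
      exact List.mem_map.mpr ⟨K', (hmemT' K').mpr ⟨hK'Ls, hK'm⟩, hK'eq⟩
    have hiff : (∃ R ∈ T'.map List.toFinset, R ∉ T.map List.toFinset) ↔
        m ∈ I.menOf (S' \ S) := by
      constructor
      · rintro ⟨R, hR, hRn⟩
        obtain ⟨K', hK', hK'eq⟩ := List.mem_map.mp hR
        obtain ⟨hK'Ls, hK'm⟩ := (hmemT' K').mp hK'
        have hRS' : R ∈ S' := (hmemS' R).mpr ⟨K', hK'Ls, hK'eq⟩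
        obtain ⟨p, hpK', hfst⟩ := List.mem_map.mp hK'm
        have hRnS : R ∉ S := by
          intro hRS
          obtain ⟨K, hKLs, hKeq⟩ := (hmemS R).mp hRS
          have hpK : p ∈ K := by
            rw [← List.mem_toFinset, hKeq, ← hK'eq, List.mem_toFinset]; exact hpK'
          have hKm : m ∈ K.map Prod.fst := List.mem_map.mpr ⟨p, hpK, hfst⟩
          exact hRn (List.mem_map.mpr ⟨K, (hmemT K).mpr ⟨hKLs, hKm⟩, hKeq⟩)
        have hpR : p ∈ R := by rw [← hK'eq, List.mem_toFinset]; exact hpK'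
        unfold SMInst.menOf
        rw [Finset.mem_biUnion]
        exact ⟨R, Finset.mem_sdiff.mpr ⟨hRS', hRnS⟩, Finset.mem_image.mpr ⟨p, hpR, hfst⟩⟩
      · intro hm
        unfold SMInst.menOf at hm
        rw [Finset.mem_biUnion] at hm
        obtain ⟨R, hRmem, hmR⟩ := hm
        obtain ⟨hRS', hRnS⟩ := Finset.mem_sdiff.mp hRmem
        obtain ⟨p, hpR, hfst⟩ := Finset.mem_image.mp hmR
        obtain ⟨K', hK'Ls, hK'eq⟩ := (hmemS' R).mp hRS'
        have hpK' : p ∈ K' := by rw [← List.mem_toFinset, hK'eq]; exact hpR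
        have hK'm : m ∈ K'.map Prod.fst := List.mem_map.mpr ⟨p, hpK', hfst⟩
        refine ⟨R, List.mem_map.mpr ⟨K', (hmemT' K').mpr ⟨hK'Ls, hK'm⟩, hK'eq⟩, ?_⟩
        intro hR
        obtain ⟨K, hK, hKeq⟩ := List.mem_map.mp hR
        exact hRnS ((hmemS R).mpr ⟨K, ((hmemT K).mp hK).1, hKeq⟩)
    have hcmp := I.mchain_compare T' T (M₀ m) (M m) (M' m) hT hT' hsubT
    constructor
    · intro hne
      by_contra hmem
      have hall : ∀ R ∈ T'.map List.toFinset, R ∈ T.map List.toFinset := by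
        intro R hR
        by_contra hn
        exact hmem (hiff.mp ⟨R, hR, hn⟩)
      exact hne (hcmp.1 hall)
    · intro hmem heq
      have := hcmp.2 (hiff.mpr hmem)
      rw [heq] at this
      exact lt_irrefl _ this
  have hset : Finset.univ.filter (fun m => M m ≠ M' m) = I.menOf (S' \ S) := by
    ext m
    simp only [Finset.mem_filter, Finset.mem_univ, true_and]
    exact key m
  unfold SMInst.mdist
  rw [hset]
end

section
/- Let M be a stable matching with closed subset S, and (m, w) ∈ M a pair not in the man-optimal matching M0, with ρ_p the unique rotation producing (m, w). Then S↑ = S \ ({ρ_p} ∪ (successors of ρ_p ∩ S)) is a closed subset of the rotation poset, and the corresponding stable matching M↑ does not contain the pair (m, w) and dominates M. -/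
namespace SMInst

variable {n : ℕ} {I : SMInst n}

/-- cyclic successor index -/
abbrev nxt {α : Type*} {l : List α} (i : Fin l.length) : Fin l.length :=
  ⟨(i.1 + 1) % l.length, Nat.mod_lt _ i.pos⟩

def IsSucc (I : SMInst n) (M : Fin n ≃ Fin n) (p q : Fin n × Fin n) : Prop :=
  I.mrank p.1 p.2 < I.mrank p.1 q.2 ∧
  I.wrank q.2 p.1 < I.wrank q.2 q.1 ∧
  ∀ w, I.mrank p.1 p.2 < I.mrank p.1 w → I.mrank p.1 w < I.mrank p.1 q.2 →
    ¬ I.wrank w p.1 < I.wrank w (M.symm w)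

variable {M M' M'' N N' : Fin n ≃ Fin n} {K K' B L : List (Fin n × Fin n)}

lemma ExposedIn.matched (h : I.ExposedIn M K) {p : Fin n × Fin n} (hp : p ∈ K) :
    M p.1 = p.2 := h.2.2.1 p hp

lemma ExposedIn.isSucc (h : I.ExposedIn M K) (i : Fin K.length) :
    I.IsSucc M (K.get i) (K.get (nxt i)) := h.2.2.2 i

lemma isSucc_unique {p q q' : Fin n × Fin n}
    (hq : I.IsSucc M p q) (hq' : I.IsSucc M'' p q')
    (hqM : M q.1 = q.2) (hq'M : M q'.1 = q'.2)
    (hqM'' : M'' q.1 = q.2) (hq'M'' : M'' q'.1 = q'.2) : q = q' := by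
  rcases lt_trichotomy (I.mrank p.1 q.2) (I.mrank p.1 q'.2) with h | h | h
  · have h3 := hq'.2.2 q.2 hq.1 h
    have hsymm : M''.symm q.2 = q.1 := (Equiv.symm_apply_eq M'').2 hqM''.symm
    rw [hsymm] at h3
    exact absurd hq.2.1 h3
  · have h2 : q.2 = q'.2 := I.mrank_inj p.1 h
    have h1 : q.1 = q'.1 := M.injective (by rw [hqM, hq'M, h2])
    exact Prod.ext h1 h2
  · have h3 := hq.2.2 q'.2 hq'.1 h
    have hsymm : M.symm q'.2 = q'.1 := (Equiv.symm_apply_eq M).2 hq'M.symm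
    rw [hsymm] at h3
    exact absurd hq'.2.1 h3

end SMInst

namespace SMInst

variable {n : ℕ} {I : SMInst n}
variable {M M' M'' N N' : Fin n ≃ Fin n} {K K' B L : List (Fin n × Fin n)}

lemma ExposedIn.eq_of_fst (h : I.ExposedIn M K) {p q : Fin n × Fin n}
    (hp : p ∈ K) (hq : q ∈ K) (h1 : p.1 = q.1) : p = q :=
  Prod.ext h1 (by rw [← h.matched hp, ← h.matched hq, h1])

lemma ExposedIn.mem_fst_iff (h : I.ExposedIn M K) {m : Fin n} :
    m ∈ K.map Prod.fst ↔ (m, M m) ∈ K := by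
  constructor
  · rintro hm
    obtain ⟨p, hp, rfl⟩ := List.mem_map.1 hm
    have := h.matched hp
    rw [show (p.1, M p.1) = p by rw [this]]
    exact hp
  · intro hm
    exact List.mem_map.2 ⟨_, hm, rfl⟩

lemma getm {α : Type*} (l : List α) (i : Fin l.length) : l.get i ∈ l := by
  have := l.get_mem i
  simpa using this

/-- shifted cyclic index -/
abbrev shiftIdx {α : Type*} {l : List α} (i : Fin l.length) (t : ℕ) : Fin l.length :=
  ⟨(i.1 + t) % l.length, Nat.mod_lt _ i.pos⟩

lemma nxt_shiftIdx {α : Type*} {l : List α} (i : Fin l.length) (t : ℕ) :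
    nxt (shiftIdx i t) = shiftIdx i (t + 1) := by
  apply Fin.ext
  show ((i.1 + t) % l.length + 1) % l.length = (i.1 + (t + 1)) % l.length
  rw [Nat.mod_add_mod, Nat.add_assoc]

lemma shiftIdx_zero {α : Type*} {l : List α} (i : Fin l.length) : shiftIdx i 0 = i := by
  apply Fin.ext
  show (i.1 + 0) % l.length = i.1
  rw [Nat.add_zero, Nat.mod_eq_of_lt i.isLt]

lemma exposed_succ_mem (hK : I.ExposedIn M K) (hK' : I.ExposedIn M K')
    (i : Fin K.length) (hi : K.get i ∈ K') : K.get (nxt i) ∈ K' := by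
  obtain ⟨j, hj⟩ := List.mem_iff_get.1 hi
  have hq : I.IsSucc M (K.get i) (K.get (nxt i)) := hK.isSucc i
  have hq' : I.IsSucc M (K.get i) (K'.get (nxt j)) := by
    have := hK'.isSucc j
    rwa [hj] at this
  have heq : K.get (nxt i) = K'.get (nxt j) :=
    isSucc_unique hq hq' (hK.matched (getm K _)) (hK'.matched (getm K' _))
      (hK.matched (getm K _)) (hK'.matched (getm K' _))
  rw [heq]; exact getm K' _

lemma exposed_subset_of_mem (hK : I.ExposedIn M K) (hK' : I.ExposedIn M K')
    {p : Fin n × Fin n} (hp : p ∈ K) (hp' : p ∈ K') : ∀ x ∈ K, x ∈ K' := by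
  obtain ⟨i₀, hi₀⟩ := List.mem_iff_get.1 hp
  have hshift : ∀ t, K.get (shiftIdx i₀ t) ∈ K' := by
    intro t
    induction t with
    | zero => rw [shiftIdx_zero, hi₀]; exact hp'
    | succ t ih => rw [← nxt_shiftIdx]; exact exposed_succ_mem hK hK' _ ih
  intro x hx
  obtain ⟨j, hj⟩ := List.mem_iff_get.1 hx
  have ht := hshift (K.length + j.1 - i₀.1)
  have harith : (i₀.1 + (K.length + j.1 - i₀.1)) % K.length = j.1 := by
    have h1 : i₀.1 + (K.length + j.1 - i₀.1) = K.length + j.1 := by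
      have := i₀.isLt; omega
    rw [h1, Nat.add_mod_left, Nat.mod_eq_of_lt j.isLt]
  have : shiftIdx i₀ (K.length + j.1 - i₀.1) = j := Fin.ext harith
  rwa [this, hj] at ht

lemma exposed_toFinset_eq (hK : I.ExposedIn M K) (hK' : I.ExposedIn M K')
    {p : Fin n × Fin n} (hp : p ∈ K) (hp' : p ∈ K') : K.toFinset = K'.toFinset := by
  apply Finset.ext
  intro x
  simp only [List.mem_toFinset]
  exact ⟨fun h => exposed_subset_of_mem hK hK' hp hp' x h,
    fun h => exposed_subset_of_mem hK' hK hp' hp x h⟩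

lemma exposed_transfer (hK : I.ExposedIn M K) (hB : I.ExposedIn M'' B)
    (hset : B.toFinset = K.toFinset) : I.ExposedIn M B := by
  have hmem : ∀ x : Fin n × Fin n, x ∈ B ↔ x ∈ K := by
    intro x; rw [← List.mem_toFinset, hset, List.mem_toFinset]
  have hmatched : ∀ p ∈ B, M p.1 = p.2 := fun p hp => hK.matched ((hmem p).1 hp)
  have hIS : ∀ i : Fin B.length, I.IsSucc M (B.get i) (B.get (nxt i)) := by
    intro i
    obtain ⟨j, hj⟩ := List.mem_iff_get.1 ((hmem _).1 (getm B i))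
    have hq : I.IsSucc M (B.get i) (K.get (nxt j)) := by
      have := hK.isSucc j; rwa [hj] at this
    have hq' : I.IsSucc M'' (B.get i) (B.get (nxt i)) := hB.isSucc i
    have heq : K.get (nxt j) = B.get (nxt i) := by
      apply isSucc_unique hq hq'
      · exact hK.matched (getm K _)
      · exact hK.matched ((hmem _).1 (getm B _))
      · exact hB.matched ((hmem _).2 (getm K _))
      · exact hB.matched (getm B _)
    have h3 := hq.2.2
    rw [heq] at hq
    exact hq
  exact ⟨hB.1, hB.2.1, hmatched, hIS⟩

end SMInst

namespace SMInst

variable {n : ℕ} {I : SMInst n}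

variable {M M' M'' N N' : Fin n ≃ Fin n} {K K' B L : List (Fin n × Fin n)}

lemma Elim.apply_fst (h : I.Elim M N K) (i : Fin K.length) :
    N (K.get i).1 = (K.get (nxt i)).2 := h.2.1 i

lemma mem_fst_get {m : Fin n} (hm : m ∈ K.map Prod.fst) :
    ∃ i : Fin K.length, (K.get i).1 = m := by
  obtain ⟨p, hp, rfl⟩ := List.mem_map.1 hm
  obtain ⟨i, hi⟩ := List.mem_iff_get.1 hp
  exact ⟨i, by rw [hi]⟩

lemma mem_snd_get {w : Fin n} (hw : w ∈ K.map Prod.snd) :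
    ∃ j : Fin K.length, (K.get j).2 = w := by
  obtain ⟨p, hp, rfl⟩ := List.mem_map.1 hw
  obtain ⟨j, hj⟩ := List.mem_iff_get.1 hp
  exact ⟨j, by rw [hj]⟩

lemma exists_prev {α : Type*} {l : List α} (j : Fin l.length) : ∃ j', nxt j' = j := by
  refine ⟨⟨(j.1 + l.length - 1) % l.length, Nat.mod_lt _ j.pos⟩, Fin.ext ?_⟩
  show ((j.1 + l.length - 1) % l.length + 1) % l.length = j.1
  rw [Nat.mod_add_mod]
  have h1 : j.1 + l.length - 1 + 1 = j.1 + l.length := by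
    have := j.pos; omega
  rw [h1, Nat.add_mod_right, Nat.mod_eq_of_lt j.isLt]

lemma ExposedIn.mem_snd_iff (h : I.ExposedIn M K) {w : Fin n} :
    w ∈ K.map Prod.snd ↔ M.symm w ∈ K.map Prod.fst := by
  constructor
  · intro hw
    obtain ⟨j, hj⟩ := mem_snd_get hw
    have hm : M (K.get j).1 = w := by rw [h.matched (getm K j), hj]
    have : M.symm w = (K.get j).1 := (Equiv.symm_apply_eq M).2 hm.symm
    rw [this]
    exact List.mem_map.2 ⟨_, getm K j, rfl⟩
  · intro hm
    have hp := (h.mem_fst_iff).1 hm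
    have : M (M.symm w) = w := M.apply_symm_apply w
    rw [this] at hp
    exact List.mem_map.2 ⟨_, hp, rfl⟩

lemma elim_apply_of_not_mem (h : I.Elim M N K) {m : Fin n}
    (hm : m ∉ K.map Prod.fst) : N m = M m := h.2.2 m hm

lemma elim_men (h : I.Elim M N K) (m : Fin n) :
    I.mrank m (M m) ≤ I.mrank m (N m) := by
  by_cases hm : m ∈ K.map Prod.fst
  · obtain ⟨i, hi⟩ := mem_fst_get hm
    have h1 : M m = (K.get i).2 := by rw [← hi]; exact h.1.matched (getm K i)
    have h2 : N m = (K.get (nxt i)).2 := by rw [← hi]; exact h.apply_fst i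
    have := (h.1.isSucc i).1
    rw [hi] at this
    rw [h1, h2]
    exact le_of_lt this
  · rw [elim_apply_of_not_mem h hm]

lemma elim_men_strict (h : I.Elim M N K) {m : Fin n} (hm : m ∈ K.map Prod.fst) :
    I.mrank m (M m) < I.mrank m (N m) := by
  obtain ⟨i, hi⟩ := mem_fst_get hm
  have h1 : M m = (K.get i).2 := by rw [← hi]; exact h.1.matched (getm K i)
  have h2 : N m = (K.get (nxt i)).2 := by rw [← hi]; exact h.apply_fst i
  have := (h.1.isSucc i).1
  rw [hi] at this
  rw [h1, h2]
  exact this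

lemma elim_symm_snd (h : I.Elim M N K) (j' : Fin K.length) :
    N.symm ((K.get (nxt j')).2) = (K.get j').1 :=
  (Equiv.symm_apply_eq N).2 (h.apply_fst j').symm

lemma elim_symm_of_not_snd (h : I.Elim M N K) {w : Fin n}
    (hw : w ∉ K.map Prod.snd) : N.symm w = M.symm w := by
  have hm : M.symm w ∉ K.map Prod.fst := fun hc => hw ((h.1.mem_snd_iff).2 hc)
  have : N (M.symm w) = M (M.symm w) := elim_apply_of_not_mem h hm
  rw [M.apply_symm_apply] at this
  exact (Equiv.symm_apply_eq N).2 this.symm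

lemma elim_women (h : I.Elim M N K) (w : Fin n) :
    I.wrank w (N.symm w) ≤ I.wrank w (M.symm w) := by
  by_cases hw : w ∈ K.map Prod.snd
  · obtain ⟨j, hj⟩ := mem_snd_get hw
    obtain ⟨j', hj'⟩ := exists_prev j
    have h1 : N.symm w = (K.get j').1 := by
      rw [← hj, ← hj']; exact elim_symm_snd h j'
    have h2 : M.symm w = (K.get j).1 := by
      rw [← hj]
      exact (Equiv.symm_apply_eq M).2 (h.1.matched (getm K j)).symm
    have := (h.1.isSucc j').2.1
    rw [hj', hj] at this
    rw [h1, h2]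
    exact le_of_lt this
  · rw [elim_symm_of_not_snd h hw]

lemma elim_stable (hst : I.IsStable M) (h : I.Elim M N K) : I.IsStable N := by
  intro a b hblock
  obtain ⟨h1, h2⟩ := hblock
  have h2' : I.wrank b a < I.wrank b (M.symm b) := lt_of_lt_of_le h2 (elim_women h b)
  have hMa : I.mrank a (M a) ≤ I.mrank a b := by
    by_contra hc
    exact hst a b ⟨lt_of_not_ge hc, h2'⟩
  rcases eq_or_lt_of_le hMa with heq | hlt
  · have : M a = b := I.mrank_inj a heq
    have : M.symm b = a := (Equiv.symm_apply_eq M).2 this.symm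
    rw [this] at h2'
    exact lt_irrefl _ h2'
  · by_cases hm : a ∈ K.map Prod.fst
    · obtain ⟨i, hi⟩ := mem_fst_get hm
      have hMa2 : M a = (K.get i).2 := by rw [← hi]; exact h.1.matched (getm K i)
      have hNa : N a = (K.get (nxt i)).2 := by rw [← hi]; exact h.apply_fst i
      have hc3 := (h.1.isSucc i).2.2 b
      rw [hi] at hc3
      exact hc3 (hMa2 ▸ hlt) (hNa ▸ h1) h2'
    · rw [elim_apply_of_not_mem h hm] at h1
      exact absurd hlt (not_lt_of_gt h1)

end SMInst

namespace SMInst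

variable {n : ℕ} {I : SMInst n}
variable {M M' M'' N N' P P' : Fin n ≃ Fin n} {K K' B J L : List (Fin n × Fin n)}

lemma ExposedIn.snd_map_eq (h : I.ExposedIn M K) :
    K.map Prod.snd = (K.map Prod.fst).map M := by
  rw [List.map_map]
  apply List.map_congr_left
  intro p hp
  exact (h.matched hp).symm

lemma ExposedIn.snd_nodup (h : I.ExposedIn M K) : (K.map Prod.snd).Nodup := by
  rw [h.snd_map_eq]
  exact h.2.1.map M.injective

lemma exists_elim (h : I.ExposedIn M K) : ∃ N, I.Elim M N K := by
  classical
  set snds := K.map Prod.snd with hsnds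
  have hnd : snds.Nodup := h.snd_nodup
  refine ⟨M.trans snds.formPerm, h, ?_, ?_⟩
  · intro i
    have hlen : snds.length = K.length := by simp [hsnds]
    have hKi : M (K.get i).1 = (K.get i).2 := h.matched (getm K i)
    have hget : snds[(i.1 : ℕ)]'(by omega) = (K.get i).2 := by
      simp [hsnds, List.getElem_map, List.get_eq_getElem]
    have hget2 : snds[((i.1+1) % K.length : ℕ)]'(by rw [hlen]; exact Nat.mod_lt _ i.pos)
        = (K.get (nxt i)).2 := by
      simp [hsnds, List.getElem_map, List.get_eq_getElem]
    show snds.formPerm (M (K.get i).1) = _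
    rw [hKi, ← hget]
    rw [List.formPerm_apply_getElem _ hnd i.1 (by omega)]
    rw [← hget2]
    congr 1
    rw [hlen]
  · intro m hm
    show snds.formPerm (M m) = M m
    apply List.formPerm_apply_of_notMem
    intro hc
    have := (h.mem_snd_iff).1 hc
    rw [Equiv.symm_apply_apply] at this
    exact hm this

end SMInst

namespace SMInst

variable {n : ℕ} {I : SMInst n}
variable {M M' M'' N N' Pm : Fin n ≃ Fin n} {K K' B J L : List (Fin n × Fin n)}

lemma fst_disjoint (hK : I.ExposedIn M K) (hK' : I.ExposedIn M K')
    (hne : K.toFinset ≠ K'.toFinset) {m : Fin n}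
    (hm : m ∈ K.map Prod.fst) : m ∉ K'.map Prod.fst := by
  intro hm'
  exact hne (exposed_toFinset_eq hK hK' ((hK.mem_fst_iff).1 hm) ((hK'.mem_fst_iff).1 hm'))

lemma pair_not_mem_of_ne (hK : I.ExposedIn M K) (hK' : I.ExposedIn M K')
    (hne : K.toFinset ≠ K'.toFinset) {p : Fin n × Fin n} (hp : p ∈ K) : p ∉ K' :=
  fun hp' => hne (exposed_toFinset_eq hK hK' hp hp')

lemma elim_unique (h : I.Elim M N K) (h' : I.Elim M N' K')
    (hset : K.toFinset = K'.toFinset) : N = N' := by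
  have hmem : ∀ x : Fin n × Fin n, x ∈ K ↔ x ∈ K' := by
    intro x; rw [← List.mem_toFinset, hset, List.mem_toFinset]
  apply Equiv.ext
  intro m
  by_cases hm : m ∈ K.map Prod.fst
  · obtain ⟨i, hi⟩ := mem_fst_get hm
    have hpK' : K.get i ∈ K' := (hmem _).1 (getm K i)
    obtain ⟨j, hj⟩ := List.mem_iff_get.1 hpK'
    have hNm : N m = (K.get (nxt i)).2 := by rw [← hi]; exact h.apply_fst i
    have hN'm : N' m = (K'.get (nxt j)).2 := by
      rw [← hi, show (K.get i).1 = (K'.get j).1 by rw [hj]]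
      exact h'.apply_fst j
    have hq : I.IsSucc M (K.get i) (K.get (nxt i)) := h.1.isSucc i
    have hq' : I.IsSucc M (K.get i) (K'.get (nxt j)) := by
      have := h'.1.isSucc j; rwa [hj] at this
    have heq : K.get (nxt i) = K'.get (nxt j) :=
      isSucc_unique hq hq' (h.1.matched (getm K _)) (h'.1.matched (getm K' _))
        (h.1.matched (getm K _)) (h'.1.matched (getm K' _))
    rw [hNm, hN'm, heq]
  · have hm' : m ∉ K'.map Prod.fst := by
      intro hc
      have hp := (h'.1.mem_fst_iff).1 hc
      exact hm ((h.1.mem_fst_iff).2 ((hmem _).2 hp))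
    rw [elim_apply_of_not_mem h hm, elim_apply_of_not_mem h' hm']

lemma persist (hE' : I.ExposedIn M K') (hEl : I.Elim M N K)
    (hne : K.toFinset ≠ K'.toFinset) : I.ExposedIn N K' := by
  have hmatched : ∀ p ∈ K', N p.1 = p.2 := by
    intro p hp
    have h1 : p.1 ∉ K.map Prod.fst := by
      intro hc
      have hpair := (hEl.1.mem_fst_iff).1 hc
      have : (p.1, M p.1) = p := by
        rw [hE'.matched hp]
      rw [this] at hpair
      exact pair_not_mem_of_ne hE' hEl.1 (Ne.symm hne) hp hpair
    rw [elim_apply_of_not_mem hEl h1]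
    exact hE'.matched hp
  have hIS : ∀ i : Fin K'.length, I.IsSucc N (K'.get i) (K'.get (nxt i)) := by
    intro i
    have hs := hE'.isSucc i
    refine ⟨hs.1, hs.2.1, ?_⟩
    intro w hw1 hw2 hblock
    exact hs.2.2 w hw1 hw2 (lt_of_lt_of_le hblock (elim_women hEl w))
  exact ⟨hE'.1, hE'.2.1, hmatched, hIS⟩

lemma diamond (hK : I.ExposedIn M K) (hK' : I.ExposedIn M K')
    (hne : K.toFinset ≠ K'.toFinset) (e : I.Elim M N K) (e' : I.Elim M N' K') :
    ∃ Pm, I.Elim N Pm K' ∧ I.Elim N' Pm K := by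
  have hexp : I.ExposedIn N K' := persist hK' e hne
  obtain ⟨Pm, eP⟩ := exists_elim hexp
  refine ⟨Pm, eP, persist hK e' (Ne.symm hne), ?_, ?_⟩
  · intro i
    have hmem : (K.get i).1 ∉ K'.map Prod.fst := fst_disjoint hK hK' hne
      (List.mem_map.2 ⟨_, getm K i, rfl⟩)
    rw [elim_apply_of_not_mem eP hmem]
    exact e.apply_fst i
  · intro m hm
    by_cases hm' : m ∈ K'.map Prod.fst
    · obtain ⟨j, hj⟩ := mem_fst_get hm'
      rw [← hj, eP.apply_fst j, e'.apply_fst j]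
    · rw [elim_apply_of_not_mem eP hm', elim_apply_of_not_mem e hm,
        elim_apply_of_not_mem e' hm']

end SMInst

namespace SMInst

variable {n : ℕ} {I : SMInst n}

variable {M M' M'' N N' P P' E E' : Fin n ≃ Fin n}
variable {K K' B J L : List (Fin n × Fin n)}
variable {As Qs X Y Z Ls : List (List (Fin n × Fin n))}

lemma elimseq_nil : I.ElimSeq M [] N ↔ N = M := Iff.rfl

lemma elimseq_cons : I.ElimSeq M (K :: As) N ↔ ∃ Mmid, I.Elim M Mmid K ∧ I.ElimSeq Mmid As N :=
  Iff.rfl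

lemma elimseq_append (h1 : I.ElimSeq M As P) (h2 : I.ElimSeq P Qs N) :
    I.ElimSeq M (As ++ Qs) N := by
  induction As generalizing M with
  | nil => rw [elimseq_nil] at h1; subst h1; exact h2
  | cons K rest ih =>
    obtain ⟨Mmid, he, hrest⟩ := h1
    exact ⟨Mmid, he, ih hrest⟩

lemma elimseq_split (h : I.ElimSeq M (As ++ Qs) N) :
    ∃ P, I.ElimSeq M As P ∧ I.ElimSeq P Qs N := by
  induction As generalizing M with
  | nil => exact ⟨M, rfl, h⟩
  | cons K rest ih =>
    obtain ⟨Mmid, he, hrest⟩ := h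
    obtain ⟨P, hP1, hP2⟩ := ih hrest
    exact ⟨P, ⟨Mmid, he, hP1⟩, hP2⟩

lemma elimseq_stable (hst : I.IsStable M) (h : I.ElimSeq M As N) : I.IsStable N := by
  induction As generalizing M with
  | nil => rw [elimseq_nil] at h; subst h; exact hst
  | cons K rest ih =>
    obtain ⟨Mmid, he, hrest⟩ := h
    exact ih (elim_stable hst he) hrest

lemma elimseq_men_mono (h : I.ElimSeq M As N) (m : Fin n) :
    I.mrank m (M m) ≤ I.mrank m (N m) := by
  induction As generalizing M with
  | nil => rw [elimseq_nil] at h; subst h; exact le_refl _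
  | cons K rest ih =>
    obtain ⟨Mmid, he, hrest⟩ := h
    exact le_trans (elim_men he m) (ih hrest)

lemma commute_seq (hJ : I.Elim M N J) (hX : I.ElimSeq M X P)
    (hne : ∀ K ∈ X, K.toFinset ≠ J.toFinset) :
    ∃ P', I.ElimSeq N X P' ∧ I.Elim P P' J := by
  induction X generalizing M N with
  | nil =>
    rw [elimseq_nil] at hX; subst hX
    exact ⟨N, rfl, hJ⟩
  | cons K₀ rest ih =>
    obtain ⟨M₁, he₀, hrest⟩ := hX
    obtain ⟨Q, hQ1, hQ2⟩ := diamond hJ.1 he₀.1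
      (fun hc => hne K₀ (List.mem_cons_self) hc.symm) hJ he₀
    obtain ⟨P', hP'1, hP'2⟩ := ih hQ2 hrest (fun K hK => hne K (List.mem_cons_of_mem _ hK))
    exact ⟨P', ⟨Q, hQ1, hP'1⟩, hP'2⟩

lemma persist_seq (hJ : I.ExposedIn M J) (hX : I.ElimSeq M X P)
    (hne : ∀ K ∈ X, K.toFinset ≠ J.toFinset) : I.ExposedIn P J := by
  induction X generalizing M with
  | nil => rw [elimseq_nil] at hX; subst hX; exact hJ
  | cons K₀ rest ih =>
    obtain ⟨M₁, he₀, hrest⟩ := hX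
    exact ih (persist hJ he₀ (hne K₀ (List.mem_cons_self)))
      hrest (fun K hK => hne K (List.mem_cons_of_mem _ hK))

lemma elimseq_norepeat (h : I.ElimSeq M Qs P) : (Qs.map List.toFinset).Nodup := by
  induction Qs generalizing M with
  | nil => exact List.nodup_nil
  | cons K rest ih =>
    obtain ⟨M₁, he, hrest⟩ := h
    rw [List.map_cons, List.nodup_cons]
    refine ⟨?_, ih hrest⟩
    intro hc
    obtain ⟨K', hK'mem, hK'set⟩ := List.mem_map.1 hc
    obtain ⟨X, Z, rfl⟩ := List.append_of_mem hK'mem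
    obtain ⟨P₁, hseqX, hseqZ⟩ := elimseq_split hrest
    obtain ⟨P₂, heK', _⟩ := hseqZ
    -- pick the first pair of K
    have hlen : 0 < K.length := lt_of_lt_of_le (by norm_num) he.1.1
    set i₀ : Fin K.length := ⟨0, hlen⟩
    set p := K.get i₀ with hp
    have hM₁ : M₁ p.1 = (K.get (nxt i₀)).2 := he.apply_fst i₀
    have hstrict : I.mrank p.1 p.2 < I.mrank p.1 (M₁ p.1) := by
      rw [hM₁]; exact (he.1.isSucc i₀).1
    have hmono := elimseq_men_mono hseqX p.1
    have hpK' : p ∈ K' := by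
      rw [← List.mem_toFinset, hK'set, List.mem_toFinset]
      exact getm K i₀
    have hP₁ : P₁ p.1 = p.2 := heK'.1.matched hpK'
    rw [hP₁] at hmono
    exact absurd (lt_of_lt_of_le hstrict hmono) (lt_irrefl _)

end SMInst

namespace SMInst

variable {n : ℕ} {I : SMInst n}
variable {M M' M'' N N' P P' E E' PA PQ : Fin n ≃ Fin n}
variable {K K' B J L : List (Fin n × Fin n)}
variable {As Qs X Y Z Ls : List (List (Fin n × Fin n))}

lemma seq_pair_strict (hseq : I.ElimSeq M (X ++ K :: Y) E) {p : Fin n × Fin n}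
    (hp : p ∈ K) : I.mrank p.1 p.2 < I.mrank p.1 (E p.1) := by
  obtain ⟨MX, hX, MX₁, heK, hY⟩ := elimseq_split hseq
  have hm : p.1 ∈ K.map Prod.fst := List.mem_map.2 ⟨p, hp, rfl⟩
  have h1 : MX p.1 = p.2 := heK.1.matched hp
  have h2 := elim_men_strict heK hm
  rw [h1] at h2
  exact lt_of_lt_of_le h2 (elimseq_men_mono hY p.1)

lemma exposed_not_mem (hseq : I.ElimSeq M As P) (hexp : I.ExposedIn P J) :
    J.toFinset ∉ As.map List.toFinset := by
  intro hc
  obtain ⟨K', hK'mem, hK'set⟩ := List.mem_map.1 hc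
  obtain ⟨X, Z, rfl⟩ := List.append_of_mem hK'mem
  obtain ⟨MX, hX, hKZ⟩ := elimseq_split hseq
  obtain ⟨MX₁, heK, hY⟩ := hKZ
  have hlen : 0 < K'.length := lt_of_lt_of_le (by norm_num) heK.1.1
  have hpK' : K'.get ⟨0, hlen⟩ ∈ K' := getm K' _
  have hstrict := seq_pair_strict hseq hpK'
  have hpJ : K'.get ⟨0, hlen⟩ ∈ J := by
    rw [← List.mem_toFinset, ← hK'set, List.mem_toFinset]
    exact hpK'
  rw [hexp.matched hpJ] at hstrict
  exact lt_irrefl _ hstrict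

lemma pull_front (hAs : I.ElimSeq M As P) (hJ : I.ExposedIn M J)
    (hmem : J.toFinset ∈ As.map List.toFinset) :
    ∃ N As', I.Elim M N J ∧ I.ElimSeq N As' P ∧
      (As.map List.toFinset).Perm (J.toFinset :: As'.map List.toFinset) := by
  induction As generalizing M with
  | nil => simp at hmem
  | cons K₀ Z ih =>
    obtain ⟨M₁, he₀, hZ⟩ := hAs
    by_cases h : K₀.toFinset = J.toFinset
    · obtain ⟨N, hN⟩ := exists_elim hJ
      have hNM₁ : N = M₁ := elim_unique hN he₀ h.symm
      refine ⟨M₁, Z, hNM₁ ▸ hN, hZ, ?_⟩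
      rw [List.map_cons, h]
    · have hmem' : J.toFinset ∈ Z.map List.toFinset := by
        rcases List.mem_map.1 hmem with ⟨K, hK, hKset⟩
        rcases List.mem_cons.1 hK with rfl | hK2
        · exact absurd hKset h
        · exact List.mem_map.2 ⟨K, hK2, hKset⟩
      have hJ₁ : I.ExposedIn M₁ J := persist hJ he₀ h
      obtain ⟨N₁, Z', hel₁, hseq₁, hperm₁⟩ := ih hZ hJ₁ hmem'
      obtain ⟨N, hN⟩ := exists_elim hJ
      obtain ⟨Q, hQ1, hQ2⟩ := diamond hJ he₀.1 (fun hc => h hc.symm) hN he₀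
      have hQN₁ : Q = N₁ := elim_unique hQ2 hel₁ rfl
      refine ⟨N, K₀ :: Z', hN, ⟨N₁, hQN₁ ▸ hQ1, hseq₁⟩, ?_⟩
      rw [List.map_cons, List.map_cons]
      exact (hperm₁.cons K₀.toFinset).trans (List.Perm.swap _ _ _)

lemma same_end_same_sets (hA : I.ElimSeq M As P) (hQ : I.ElimSeq M Qs P) :
    (As.map List.toFinset).Perm (Qs.map List.toFinset) := by
  induction As generalizing M Qs with
  | nil =>
    have hPM : P = M := hA
    cases Qs with
    | nil => exact List.Perm.refl _
    | cons J rest =>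
      exfalso
      obtain ⟨MJ, heJ, hrest⟩ := hQ
      have hlen : 0 < J.length := lt_of_lt_of_le (by norm_num) heJ.1.1
      have h1 : M (J.get ⟨0, hlen⟩).1 = (J.get ⟨0, hlen⟩).2 := heJ.1.matched (getm J _)
      have h2 := elim_men_strict heJ (List.mem_map.2 ⟨J.get ⟨0, hlen⟩, getm J _, rfl⟩)
      have h3 := elimseq_men_mono hrest (J.get ⟨0, hlen⟩).1
      rw [hPM] at h3
      exact absurd (lt_of_lt_of_le h2 h3) (lt_irrefl _)
  | cons J rest ih =>
    obtain ⟨MJ, heJ, hrest⟩ := hA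
    have hmem : J.toFinset ∈ Qs.map List.toFinset := by
      by_contra hc
      have hne : ∀ K ∈ Qs, K.toFinset ≠ J.toFinset := by
        intro K hK hKeq
        exact hc (hKeq ▸ List.mem_map.2 ⟨K, hK, rfl⟩)
      have hexp : I.ExposedIn P J := persist_seq heJ.1 hQ hne
      exact exposed_not_mem (elimseq_cons.2 ⟨MJ, heJ, hrest⟩) hexp (List.mem_map.2 ⟨J, List.mem_cons_self, rfl⟩)
    obtain ⟨N, Qs', hN, hseq', hperm'⟩ := pull_front hQ heJ.1 hmem
    have hNMJ : N = MJ := elim_unique hN heJ rfl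
    have hih := ih hrest (hNMJ ▸ hseq')
    rw [List.map_cons]
    exact ((hih.cons J.toFinset).trans hperm'.symm)

lemma union_seq (hAs : I.ElimSeq M As PA) (hQs : I.ElimSeq M Qs PQ)
    (hnd : (Qs.map List.toFinset).Nodup) :
    ∃ P', I.ElimSeq PA
      (Qs.filter fun K => decide (K.toFinset ∉ As.map List.toFinset)) P' := by
  classical
  induction Qs generalizing M As PA with
  | nil => exact ⟨PA, rfl⟩
  | cons J rest ih =>
    obtain ⟨MJ, heJ, hrest⟩ := hQs
    rw [List.map_cons, List.nodup_cons] at hnd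
    by_cases hmem : J.toFinset ∈ As.map List.toFinset
    · obtain ⟨N, As', hN, hseq', hperm'⟩ := pull_front hAs heJ.1 hmem
      have hNMJ : N = MJ := elim_unique hN heJ rfl
      obtain ⟨P', hP'⟩ := ih (hNMJ ▸ hseq') hrest hnd.2
      refine ⟨P', ?_⟩
      have hfilter : ((J :: rest).filter fun K => decide (K.toFinset ∉ As.map List.toFinset))
          = rest.filter fun K => decide (K.toFinset ∉ As'.map List.toFinset) := by
        rw [List.filter_cons]
        rw [if_neg (by simpa using hmem)]
        apply List.filter_congr
        intro K hK
        have hKne : K.toFinset ≠ J.toFinset := by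
          intro hcc
          exact hnd.1 (hcc ▸ List.mem_map.2 ⟨K, hK, rfl⟩)
        have hiff : K.toFinset ∈ As.map List.toFinset ↔ K.toFinset ∈ As'.map List.toFinset := by
          rw [hperm'.mem_iff, List.mem_cons]
          exact ⟨fun h => h.resolve_left hKne, Or.inr⟩
        simp only [decide_eq_decide]
        exact not_congr hiff
      rw [hfilter]
      exact hP'
    · have hne : ∀ K ∈ As, K.toFinset ≠ J.toFinset := by
        intro K hK hKeq
        exact hmem (hKeq ▸ List.mem_map.2 ⟨K, hK, rfl⟩)
      obtain ⟨P_N, hseqN, helPA⟩ := commute_seq heJ hAs hne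
      obtain ⟨P', hP'⟩ := ih hseqN hrest hnd.2
      refine ⟨P', ?_⟩
      have hfilter : ((J :: rest).filter fun K => decide (K.toFinset ∉ As.map List.toFinset))
          = J :: (rest.filter fun K => decide (K.toFinset ∉ As.map List.toFinset)) := by
        rw [List.filter_cons]
        rw [if_pos (by simpa using hmem)]
      rw [hfilter]
      exact ⟨P_N, helPA, hP'⟩

end SMInst

namespace SMInst

variable {n : ℕ} {I : SMInst n}

variable {M M₁ M₂ N M₀ M₀' : Fin n ≃ Fin n}

lemma manopt_unique (h1 : I.IsManOptimal M₀) (h2 : I.IsManOptimal M₀') : M₀ = M₀' := by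
  apply Equiv.ext
  intro m
  exact I.mrank_inj m (le_antisymm (h1.2 _ h2.1 m) (h2.2 _ h1.1 m))

lemma women_side (hN : I.IsStable N) (hdom : I.Dominates M N) (w : Fin n) :
    I.wrank w (N.symm w) ≤ I.wrank w (M.symm w) := by
  by_contra hc
  push_neg at hc
  set μ := M.symm w with hμ
  have hMμ : M μ = w := M.apply_symm_apply w
  have hNμ : N μ ≠ w := by
    intro hNw
    have : N.symm w = μ := (Equiv.symm_apply_eq N).2 hNw.symm
    rw [this] at hc
    exact lt_irrefl _ hc
  apply hN μ w
  constructor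
  · have h1 : I.mrank μ (M μ) ≤ I.mrank μ (N μ) := hdom μ
    rw [hMμ] at h1
    rcases eq_or_lt_of_le h1 with he | hl
    · exact absurd (I.mrank_inj μ he).symm hNμ
    · exact hl
  · exact hc

lemma exists_meet (h1 : I.IsStable M₁) (h2 : I.IsStable M₂) :
    ∃ W : Fin n ≃ Fin n, I.IsStable W ∧ (∀ m, W m = M₁ m ∨ W m = M₂ m) ∧
      I.Dominates W M₁ ∧ I.Dominates W M₂ := by
  classical
  set f : Fin n → Fin n :=
    fun m => if I.mrank m (M₁ m) ≤ I.mrank m (M₂ m) then M₁ m else M₂ m with hf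
  have hfcases : ∀ m, f m = M₁ m ∨ f m = M₂ m := by
    intro m
    by_cases h : I.mrank m (M₁ m) ≤ I.mrank m (M₂ m)
    · exact Or.inl (by simp [hf, h])
    · exact Or.inr (by simp [hf, h])
  have hd1 : ∀ m, I.mrank m (f m) ≤ I.mrank m (M₁ m) := by
    intro m
    by_cases h : I.mrank m (M₁ m) ≤ I.mrank m (M₂ m)
    · simp [hf, h]
    · simp only [hf, if_neg h]
      exact le_of_lt (lt_of_not_ge h)
  have hd2 : ∀ m, I.mrank m (f m) ≤ I.mrank m (M₂ m) := by
    intro m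
    by_cases h : I.mrank m (M₁ m) ≤ I.mrank m (M₂ m)
    · simp only [hf, if_pos h]; exact h
    · simp [hf, h]
  -- injectivity
  have hinj : Function.Injective f := by
    intro a b hab
    by_contra hne
    -- the two symmetric hard cases
    have key : ∀ a b : Fin n, a ≠ b → f a = M₁ a → f b = M₂ b → f a = f b → False := by
      intro a b hne ha hb hab
      have hw2 : M₂ b = M₁ a := by rw [← hb, ← hab, ha]
      have hM₁b : M₁ b ≠ M₁ a := fun hc => hne (M₁.injective hc).symm
      have hM₂a : M₂ a ≠ M₁ a := by
        intro hc
        exact hne (M₂.injective (by rw [hc, ← hw2]))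
      have hma : I.mrank a (M₁ a) ≤ I.mrank a (M₂ a) := by
        have := hd2 a; rwa [ha] at this
      have hma' : I.mrank a (M₁ a) < I.mrank a (M₂ a) :=
        lt_of_le_of_ne hma (fun he => hM₂a (I.mrank_inj a he.symm))
      have hmb : I.mrank b (M₂ b) ≤ I.mrank b (M₁ b) := by
        have := hd1 b; rwa [hb] at this
      have hmb' : I.mrank b (M₂ b) < I.mrank b (M₁ b) :=
        lt_of_le_of_ne hmb (fun he => hM₁b (by rw [← I.mrank_inj b he, hw2]))
      rcases lt_trichotomy (I.wrank (M₁ a) a) (I.wrank (M₁ a) b) with hlt | heq | hgt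
      · apply h2 a (M₁ a)
        refine ⟨hma', ?_⟩
        have hsm : M₂.symm (M₁ a) = b := (Equiv.symm_apply_eq M₂).2 hw2.symm
        rw [hsm]; exact hlt
      · exact hne (I.wrank_inj (M₁ a) heq)
      · apply h1 b (M₁ a)
        refine ⟨?_, ?_⟩
        · rw [← hw2]; exact hmb'
        · rw [Equiv.symm_apply_apply]; exact hgt
    rcases hfcases a with ha | ha <;> rcases hfcases b with hb | hb
    · exact hne (M₁.injective (by rw [← ha, ← hb, hab]))
    · exact key a b hne ha hb hab
    · exact key b a (Ne.symm hne) hb ha hab.symm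
    · exact hne (M₂.injective (by rw [← ha, ← hb, hab]))
  have hbij : Function.Bijective f := (Finite.injective_iff_bijective).1 hinj
  set W := Equiv.ofBijective f hbij with hW
  have hWapp : ∀ m, W m = f m := fun m => rfl
  refine ⟨W, ?_, fun m => (hWapp m ▸ hfcases m), fun m => hWapp m ▸ hd1 m,
    fun m => hWapp m ▸ hd2 m⟩
  intro a b hblock
  obtain ⟨hb1, hb2⟩ := hblock
  set m' := W.symm b with hm'
  have hWm' : W m' = b := W.apply_symm_apply b
  rcases hfcases m' with hcase | hcase
  · apply h1 a b
    constructor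
    · exact lt_of_lt_of_le hb1 (hd1 a)
    · have : M₁.symm b = m' := (Equiv.symm_apply_eq M₁).2 (by rw [← hcase, ← hWapp, hWm'])
      rw [this]; exact hb2
  · apply h2 a b
    constructor
    · exact lt_of_lt_of_le hb1 (hd2 a)
    · have : M₂.symm b = m' := (Equiv.symm_apply_eq M₂).2 (by rw [← hcase, ← hWapp, hWm'])
      rw [this]; exact hb2

end SMInst

namespace SMInst

variable {n : ℕ} {I : SMInst n}
variable {M M₁ N : Fin n ≃ Fin n}

lemma towards (hM : I.IsStable M) (hN : I.IsStable N) (hdom : I.Dominates M N)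
    (hne : M ≠ N) : ∃ L M₁, I.Elim M M₁ L ∧ I.Dominates M₁ N := by
  classical
  -- candidate set for each man
  set C : Fin n → Finset (Fin n) := fun m => Finset.univ.filter
    (fun w => I.mrank m (M m) < I.mrank m w ∧ I.wrank w m < I.wrank w (M.symm w)) with hC
  have hNmem : ∀ m, M m ≠ N m → N m ∈ C m := by
    intro m hD
    rw [hC, Finset.mem_filter]
    refine ⟨Finset.mem_univ _, ?_, ?_⟩
    · exact lt_of_le_of_ne (hdom m) (fun he => hD (I.mrank_inj m he))
    · have h1 := women_side hN hdom (N m)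
      rw [Equiv.symm_apply_apply] at h1
      have h2 : M.symm (N m) ≠ m := by
        intro hc
        exact hD ((Equiv.symm_apply_eq M).1 hc).symm
      exact lt_of_le_of_ne h1 (fun he => h2 (I.wrank_inj (N m) he.symm))
  -- selection of the best candidate
  have hsel : ∀ m : Fin n, ∃ w : Fin n, M m ≠ N m →
      (w ∈ C m ∧ ∀ w' ∈ C m, I.mrank m w ≤ I.mrank m w') := by
    intro m
    by_cases hD : M m ≠ N m
    · obtain ⟨w, hw, hmin⟩ := Finset.exists_min_image (C m) (I.mrank m) ⟨N m, hNmem m hD⟩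
      exact ⟨w, fun _ => ⟨hw, hmin⟩⟩
    · exact ⟨M m, fun h => absurd h hD⟩
  choose nextw hspec using hsel
  set s : Fin n → Fin n := fun m => M.symm (nextw m) with hs
  have hMs : ∀ m, M (s m) = nextw m := fun m => M.apply_symm_apply _
  have hsD : ∀ m, M m ≠ N m → M (s m) ≠ N (s m) := by
    intro m hD
    intro hc
    obtain ⟨hmem, hmin⟩ := hspec m hD
    rw [hC, Finset.mem_filter] at hmem
    obtain ⟨-, hm1, hm2⟩ := hmem
    -- blocks N at (m, nextw m)
    apply hN m (nextw m)
    constructor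
    · rcases eq_or_lt_of_le (hmin (N m) (hNmem m hD)) with he | hl
      · -- nextw m = N m leads to contradiction
        exfalso
        have he2 : nextw m = N m := I.mrank_inj m he
        have hsm : s m = m := by
          apply N.injective
          rw [← hc, hMs, he2]
        have hMm : M m = nextw m := by rw [← hMs m, hsm]
        rw [← hMm] at hm1
        exact lt_irrefl _ hm1
      · exact hl
    · have hNsm : N.symm (nextw m) = s m := by
        apply (Equiv.symm_apply_eq N).2
        rw [← hc, hMs]
      rw [hNsm]
      exact hm2
  -- s moves every disagreeing man
  have hsne : ∀ m, M m ≠ N m → s m ≠ m := by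
    intro m hD hc
    obtain ⟨hmem, -⟩ := hspec m hD
    rw [hC, Finset.mem_filter] at hmem
    have hMm : M m = nextw m := by rw [← hMs m, hc]
    rw [← hMm] at hmem
    exact lt_irrefl _ hmem.2.1
  obtain ⟨m₀, hm₀⟩ : ∃ m, M m ≠ N m := by
    by_contra hall
    push_neg at hall
    exact hne (Equiv.ext hall)
  set f : ℕ → Fin n := fun t => s^[t] m₀ with hfdef
  have hfs : ∀ t, f (t + 1) = s (f t) := fun t => Function.iterate_succ_apply' s t m₀
  have hfD : ∀ t, M (f t) ≠ N (f t) := by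
    intro t
    induction t with
    | zero => exact hm₀
    | succ t ih => rw [hfs t]; exact hsD _ ih
  obtain ⟨a, b, hneab, hfeq⟩ : ∃ a b : ℕ, a ≠ b ∧ f a = f b := by
    obtain ⟨a, b, h1, h2⟩ := Finite.exists_ne_map_eq_of_infinite f
    exact ⟨a, b, h1, h2⟩
  have hjPex : ∃ j, ∃ i, i < j ∧ f i = f j := by
    rcases hneab.lt_or_gt with h | h
    · exact ⟨b, a, h, hfeq⟩
    · exact ⟨a, b, h, hfeq.symm⟩
  set j₁ := Nat.find hjPex with hj₁
  obtain ⟨i₁, hij, hfij⟩ := Nat.find_spec hjPex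
  have hwin : ∀ x y, x < y → y < j₁ → f x ≠ f y := by
    intro x y hxy hy hfe
    exact Nat.find_min hjPex hy ⟨x, hxy, hfe⟩
  set ℓ := j₁ - i₁ with hℓ
  have hj₁eq : j₁ = i₁ + ℓ := by omega
  have hℓ2 : 2 ≤ ℓ := by
    by_contra hc
    have hℓ1 : ℓ = 1 := by omega
    have : f (i₁ + 1) = f i₁ := by
      rw [show i₁ + 1 = j₁ by omega]
      exact hfij.symm
    rw [hfs i₁] at this
    exact hsne _ (hfD i₁) this
  set cyc : List (Fin n) := (List.range ℓ).map (fun t => f (i₁ + t)) with hcyc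
  have hclen : cyc.length = ℓ := by simp [hcyc]
  have hcget : ∀ i : Fin cyc.length, cyc.get i = f (i₁ + i.1) := by
    intro i
    simp [hcyc, List.get_eq_getElem]
  have hcnodup : cyc.Nodup := by
    rw [hcyc]
    apply List.Nodup.map_on _ List.nodup_range
    intro x hx y hy hfe
    rw [List.mem_range] at hx hy
    by_contra hxy
    rcases Nat.lt_or_ge x y with h | h
    · exact hwin (i₁ + x) (i₁ + y) (by omega) (by omega) hfe
    · have h' : y < x := by omega
      exact hwin (i₁ + y) (i₁ + x) (by omega) (by omega) hfe.symm
  set L : List (Fin n × Fin n) := cyc.map (fun m => (m, M m)) with hL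
  have hLlen : L.length = ℓ := by simp [hL, hclen]
  have hLget : ∀ i : Fin L.length, L.get i = (f (i₁ + i.1), M (f (i₁ + i.1))) := by
    intro i
    have hi : i.1 < cyc.length := by rw [hclen, ← hLlen]; exact i.isLt
    have : L.get i = (cyc.get ⟨i.1, hi⟩, M (cyc.get ⟨i.1, hi⟩)) := by
      simp [hL, List.get_eq_getElem]
    rw [this, hcget ⟨i.1, hi⟩]
  have hfst : L.map Prod.fst = cyc := by
    rw [hL, List.map_map]
    have hcomp : (Prod.fst ∘ fun m : Fin n => (m, M m)) = id := rfl
    rw [hcomp, List.map_id]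
  have hstep : ∀ k : ℕ, k < ℓ → f (i₁ + ((k + 1) % ℓ)) = s (f (i₁ + k)) := by
    intro k hk
    rcases Nat.lt_or_ge (k + 1) ℓ with h | h
    · rw [Nat.mod_eq_of_lt h, show i₁ + (k + 1) = (i₁ + k) + 1 by omega, hfs]
    · have hieq : k + 1 = ℓ := by omega
      rw [hieq, Nat.mod_self, Nat.add_zero]
      have h1 : f i₁ = f j₁ := hfij
      have h2 : j₁ = (i₁ + k) + 1 := by omega
      rw [h1, h2, hfs]
  have hstep' : ∀ k : ℕ, k < L.length → f (i₁ + (k + 1) % L.length) = s (f (i₁ + k)) := by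
    rw [hLlen]
    exact hstep
  -- key facts about each man in the cycle
  have hkey : ∀ i : Fin L.length,
      (L.get i).1 = f (i₁ + i.1) ∧
      (L.get i).2 = M (f (i₁ + i.1)) ∧
      (L.get ⟨(i.1 + 1) % L.length, Nat.mod_lt _ i.pos⟩) =
        (s (f (i₁ + i.1)), nextw (f (i₁ + i.1))) := by
    intro i
    refine ⟨by rw [hLget i], by rw [hLget i], ?_⟩
    have hg := hLget ⟨(i.1 + 1) % L.length, Nat.mod_lt _ i.pos⟩
    rw [hg]
    show (f (i₁ + (i.1 + 1) % L.length), M (f (i₁ + (i.1 + 1) % L.length)))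
      = (s (f (i₁ + i.1)), nextw (f (i₁ + i.1)))
    rw [hstep' i.1 i.isLt, hMs]
  have hexp : I.ExposedIn M L := by
    refine ⟨by rw [hLlen]; exact hℓ2, by rw [hfst]; exact hcnodup, ?_, ?_⟩
    · intro p hp
      obtain ⟨c, hc, rfl⟩ := List.mem_map.1 hp
      rfl
    · intro i
      obtain ⟨hk1, hk2, hk3⟩ := hkey i
      set m := f (i₁ + i.1) with hm
      have hD : M m ≠ N m := hfD _
      obtain ⟨hmem, hmin⟩ := hspec m hD
      rw [hC, Finset.mem_filter] at hmem
      obtain ⟨-, hm1, hm2⟩ := hmem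
      rw [hk1, hk2, hk3]
      refine ⟨hm1, ?_, ?_⟩
      · show I.wrank (nextw m) m < I.wrank (nextw m) (s m)
        have : M.symm (nextw m) = s m := rfl
        rw [← this]
        exact hm2
      · intro w hw1 hw2 hwb
        have hwC : w ∈ C m := by
          rw [hC, Finset.mem_filter]
          exact ⟨Finset.mem_univ _, hw1, hwb⟩
        exact absurd hw2 (not_lt_of_ge (hmin w hwC))
  obtain ⟨M₁, hel⟩ := exists_elim hexp
  refine ⟨L, M₁, hel, ?_⟩
  intro m
  by_cases hm : m ∈ L.map Prod.fst
  · obtain ⟨i, hi⟩ := mem_fst_get hm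
    obtain ⟨hk1, hk2, hk3⟩ := hkey i
    have hmm : m = f (i₁ + i.1) := by rw [← hi, hk1]
    have hM₁ : M₁ m = nextw (f (i₁ + i.1)) := by
      rw [← hi, hel.apply_fst i, hk3]
    have hD : M (f (i₁ + i.1)) ≠ N (f (i₁ + i.1)) := hfD _
    obtain ⟨-, hmin⟩ := hspec _ hD
    rw [hM₁, hmm]
    exact hmin (N (f (i₁ + i.1))) (hNmem _ hD)
  · rw [elim_apply_of_not_mem hel hm]
    exact hdom m

lemma reach (hM : I.IsStable M) (hN : I.IsStable N) (hdom : I.Dominates M N) :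
    ∃ Ls, I.ElimSeq M Ls N := by
  classical
  generalize hk : (∑ m : Fin n, (I.mrank m (N m) - I.mrank m (M m))) = k
  induction k using Nat.strong_induction_on generalizing M with
  | _ k ih =>
    by_cases heq : M = N
    · exact ⟨[], heq.symm⟩
    · obtain ⟨L, M₁, hel, hdom₁⟩ := towards hM hN hdom heq
      have hM₁st : I.IsStable M₁ := elim_stable hM hel
      have hlt : (∑ m : Fin n, (I.mrank m (N m) - I.mrank m (M₁ m))) < k := by
        rw [← hk]
        apply Finset.sum_lt_sum
        · intro m _
          have := elim_men hel m
          omega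
        · have hlen : 0 < L.length := lt_of_lt_of_le (by norm_num) hel.1.1
          set p := L.get ⟨0, hlen⟩
          refine ⟨p.1, Finset.mem_univ _, ?_⟩
          have hstrict := elim_men_strict hel (List.mem_map.2 ⟨p, getm L _, rfl⟩)
          have hle := hdom₁ p.1
          have hle2 := hdom p.1
          omega
      obtain ⟨Ls, hLs⟩ := ih _ hlt hM₁st hdom₁ rfl
      exact ⟨L :: Ls, M₁, hel, hLs⟩

end SMInst

namespace SMInst

variable {n : ℕ} {I : SMInst n}

variable {M M₁ N P E : Fin n ≃ Fin n} {K Lp : List (Fin n × Fin n)}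
variable {Qs : List (List (Fin n × Fin n))}

lemma produces_of_seq (hseq : I.ElimSeq M Qs P) {m w : Fin n} (hPw : P m = w)
    (hMw : M m ≠ w) : ∃ K ∈ Qs, I.Produces K m w := by
  induction Qs generalizing M with
  | nil => exact absurd (by rw [← (elimseq_nil.1 hseq)]; exact hPw) hMw
  | cons K rest ih =>
    obtain ⟨M₁, he, hrest⟩ := hseq
    by_cases h1 : M₁ m = w
    · have hm : m ∈ K.map Prod.fst := by
        by_contra hc
        rw [elim_apply_of_not_mem he hc] at h1
        exact hMw h1
      obtain ⟨i, hi⟩ := mem_fst_get hm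
      refine ⟨K, List.mem_cons_self, i, hi, ?_⟩
      have := he.apply_fst i
      rw [hi, h1] at this
      exact this.symm
    · obtain ⟨K', hK'm, hK'p⟩ := ih hrest h1
      exact ⟨K', List.mem_cons_of_mem _ hK'm, hK'p⟩

lemma partner_after (he : I.Elim M M₁ K) {m w : Fin n} (hp : I.Produces K m w) :
    M₁ m = w := by
  obtain ⟨i, hi1, hi2⟩ := hp
  rw [← hi1, he.apply_fst i, hi2]

lemma precedesR_trans {A B C : Finset (Fin n × Fin n)}
    (h1 : I.PrecedesR A B) (h2 : I.PrecedesR B C) : I.PrecedesR A C := by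
  obtain ⟨La, Lb, ra, rb, hsa, hsb, pab⟩ := h1
  obtain ⟨Lb', Lc, rb', rc, hsb', hsc, pbc⟩ := h2
  refine ⟨La, Lc, ra, rc, hsa, hsc, ?_⟩
  intro M₀' Ks M' hopt hseq hst hexp
  obtain ⟨K, hKmem, hKset⟩ := pbc M₀' Ks M' hopt hseq hst hexp
  obtain ⟨X, Z, rfl⟩ := List.append_of_mem hKmem
  obtain ⟨E₁, hseqX, hseqZ⟩ := elimseq_split hseq
  obtain ⟨E₂, heK, -⟩ := hseqZ
  have hstE₁ : I.IsStable E₁ := elimseq_stable hopt.1 hseqX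
  obtain ⟨MB, hMBst, hMBexp⟩ := rb
  have hexpB : I.ExposedIn E₁ Lb :=
    exposed_transfer heK.1 hMBexp (by rw [hsb, ← hsb', ← hKset])
  obtain ⟨J, hJmem, hJset⟩ := pab M₀' X E₁ hopt hseqX hstE₁ hexpB
  exact ⟨J, List.mem_append_left _ hJmem, hJset⟩

end SMInst

/-- removing from `S` the rotation producing `(m, w)` together with its
successors in `S` yields a closed subset `S↑` whose stable matching avoids `(m, w)`
and dominates `M`. -/
theorem up_repair_is_closed_and_dominates {n : ℕ} (I : SMInst n)
    (M₀ M : Fin n ≃ Fin n) (hM₀ : I.IsManOptimal M₀) (hM : I.IsStable M)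
    (S : Finset (Finset (Fin n × Fin n))) (hS : I.IsClosedF S)
    (hc : I.Corresponds M₀ S M) (m w : Fin n) (hmw : M m = w) (h0 : M₀ m ≠ w)
    (Lp : List (Fin n × Fin n)) (hLp : I.IsRotation Lp) (hprod : I.Produces Lp m w)
    (Sup : Finset (Finset (Fin n × Fin n)))
    (hSup : ∀ R, R ∈ Sup ↔ R ∈ S ∧ ¬ (R = Lp.toFinset ∨ I.PrecedesR Lp.toFinset R)) :
    I.IsClosedF Sup ∧
    ∃ Mu : Fin n ≃ Fin n, I.IsStable Mu ∧ I.Corresponds M₀ Sup Mu ∧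
      Mu m ≠ w ∧ I.Dominates Mu M := by
  classical
  obtain ⟨Ls, hLnd, hLset, hLseq⟩ := hc
  have hM₀st : I.IsStable M₀ := hM₀.1
  -- Part A: Sup is closed
  have hclosed : I.IsClosedF Sup := by
    constructor
    · intro R hR
      exact hS.1 R ((hSup R).1 hR).1
    · intro R hR R' hR'rot hprec
      obtain ⟨hRS, hRav⟩ := (hSup R).1 hR
      have hR'S : R' ∈ S := hS.2 R hRS R' hR'rot hprec
      rw [hSup R']
      refine ⟨hR'S, ?_⟩
      rintro (rfl | hpre)
      · exact hRav (Or.inr hprec)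
      · exact hRav (Or.inr (SMInst.precedesR_trans hpre hprec))
  refine ⟨hclosed, ?_⟩
  -- avoid lemma: sequences from M₀ avoiding Lp as a set avoid all successors of Lp
  have havoid : ∀ (Q : List (List (Fin n × Fin n))) (E : Fin n ≃ Fin n),
      I.ElimSeq M₀ Q E → (∀ K ∈ Q, K.toFinset ≠ Lp.toFinset) →
      ∀ K ∈ Q, ¬ I.PrecedesR Lp.toFinset K.toFinset := by
    intro Q E hseq hne K hK hpre
    obtain ⟨Λ', Λ, rΛ', rΛ, hΛ's, hΛs, hprec⟩ := hpre
    obtain ⟨X, Z, rfl⟩ := List.append_of_mem hK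
    obtain ⟨E₁, hseqX, hseqZ⟩ := SMInst.elimseq_split hseq
    obtain ⟨E₂, heK, -⟩ := hseqZ
    have hstE₁ : I.IsStable E₁ := SMInst.elimseq_stable hM₀st hseqX
    obtain ⟨MΛ, hMΛst, hMΛexp⟩ := rΛ
    have hexpΛ : I.ExposedIn E₁ Λ := SMInst.exposed_transfer heK.1 hMΛexp hΛs
    obtain ⟨J, hJm, hJs⟩ := hprec M₀ X E₁ hM₀ hseqX hstE₁ hexpΛ
    exact hne J (List.mem_append_left _ hJm) (hJs.trans hΛ's)
  -- witness sequences for elements of Sup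
  have hwitness : ∀ R ∈ Sup, ∃ (Q : List (List (Fin n × Fin n))) (E : Fin n ≃ Fin n),
      I.ElimSeq M₀ Q E ∧ (∀ K ∈ Q, K.toFinset ≠ Lp.toFinset) ∧
      R ∈ Q.map List.toFinset := by
    intro R hR
    obtain ⟨hRS, hRav⟩ := (hSup R).1 hR
    obtain ⟨BR, hBrot, hBset⟩ := hS.1 R hRS
    have hnpre : ¬ I.Precedes Lp BR := by
      intro hp
      exact hRav (Or.inr ⟨Lp, BR, hLp, hBrot, rfl, hBset, hp⟩)
    rw [SMInst.Precedes] at hnpre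
    push_neg at hnpre
    obtain ⟨M₀', Q₀, M', hopt', hseq', hst', hexp', hforall⟩ := hnpre
    have hM₀eq : M₀' = M₀ := SMInst.manopt_unique hopt' hM₀
    subst hM₀eq
    obtain ⟨E, hE⟩ := SMInst.exists_elim hexp'
    refine ⟨Q₀ ++ [BR], E, SMInst.elimseq_append hseq' ⟨E, hE, rfl⟩, ?_, ?_⟩
    · intro K hK
      rcases List.mem_append.1 hK with h | h
      · exact hforall K h
      · have : K = BR := by simpa using h
        subst this
        intro hcc
        exact hRav (Or.inl (by rw [← hBset, hcc]))
    · rw [List.map_append]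
      apply List.mem_append_right
      simp [hBset]
  -- build a single sequence Us covering Sup and avoiding Lp and its successors
  have hbuild : ∀ (l : List (Finset (Fin n × Fin n))), (∀ R ∈ l, R ∈ Sup) →
      ∃ (Us : List (List (Fin n × Fin n))) (E : Fin n ≃ Fin n),
        I.ElimSeq M₀ Us E ∧ (∀ K ∈ Us, K.toFinset ≠ Lp.toFinset) ∧
        ∀ R ∈ l, R ∈ Us.map List.toFinset := by
    intro l
    induction l with
    | nil => exact fun _ => ⟨[], M₀, rfl, by simp, by simp⟩
    | cons R tl ih =>
      intro hmem
      obtain ⟨Us, E, hseq, hne, hcon⟩ := ih (fun R' h => hmem _ (List.mem_cons_of_mem _ h))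
      obtain ⟨Q, EQ, hQseq, hQne, hQmem⟩ := hwitness R (hmem R (List.mem_cons_self))
      obtain ⟨E₂, hE₂⟩ := SMInst.union_seq hseq hQseq (SMInst.elimseq_norepeat hQseq)
      refine ⟨Us ++ Q.filter (fun K => decide (K.toFinset ∉ Us.map List.toFinset)), E₂,
        SMInst.elimseq_append hseq hE₂, ?_, ?_⟩
      · intro K hK
        rcases List.mem_append.1 hK with h | h
        · exact hne K h
        · exact hQne K (List.mem_of_mem_filter h)
      · intro R' hR'
        rcases List.mem_cons.1 hR' with rfl | h
        · by_cases hUs : R' ∈ Us.map List.toFinset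
          · rw [List.map_append]
            exact List.mem_append_left _ hUs
          · obtain ⟨KB, hKBm, hKBs⟩ := List.mem_map.1 hQmem
            rw [List.map_append]
            apply List.mem_append_right
            apply List.mem_map.2
            refine ⟨KB, List.mem_filter.2 ⟨hKBm, ?_⟩, hKBs⟩
            simp only [decide_eq_true_eq]
            rw [hKBs]
            exact hUs
        · rw [List.map_append]
          exact List.mem_append_left _ (hcon R' h)
  obtain ⟨Us, MU, hUsseq, hUsne, hUscon⟩ := hbuild Sup.toList (fun R h => Finset.mem_toList.1 h)
  have hUavoid := havoid Us MU hUsseq hUsne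
  have hMUst : I.IsStable MU := SMInst.elimseq_stable hM₀st hUsseq
  -- meet of M and MU
  obtain ⟨W, hWst, hWcases, hWd1, hWd2⟩ := SMInst.exists_meet hM hMUst
  obtain ⟨Vs, hVsseq⟩ := SMInst.reach hM₀st hWst (hM₀.2 W hWst)
  obtain ⟨Ds, hDsseq⟩ := SMInst.reach hWst hM hWd1
  obtain ⟨Ds2, hDs2seq⟩ := SMInst.reach hWst hMUst hWd2
  have hperm1 : ((Vs ++ Ds).map List.toFinset).Perm (Ls.map List.toFinset) :=
    SMInst.same_end_same_sets (SMInst.elimseq_append hVsseq hDsseq) hLseq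
  have hperm2 : ((Vs ++ Ds2).map List.toFinset).Perm (Us.map List.toFinset) :=
    SMInst.same_end_same_sets (SMInst.elimseq_append hVsseq hDs2seq) hUsseq
  have hVsub1 : ∀ R ∈ Vs.map List.toFinset, R ∈ Ls.map List.toFinset := by
    intro R hR
    apply hperm1.mem_iff.1
    rw [List.map_append]
    exact List.mem_append_left _ hR
  have hVsub2 : ∀ R ∈ Vs.map List.toFinset, R ∈ Us.map List.toFinset := by
    intro R hR
    apply hperm2.mem_iff.1
    rw [List.map_append]
    exact List.mem_append_left _ hR
  -- pair strictness facts
  have hpairLs : ∀ R ∈ Ls.map List.toFinset, ∀ p ∈ R, I.mrank p.1 p.2 < I.mrank p.1 (M p.1) := by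
    intro R hR p hp
    obtain ⟨K, hKm, hKs⟩ := List.mem_map.1 hR
    obtain ⟨X, Z, rfl⟩ := List.append_of_mem hKm
    exact SMInst.seq_pair_strict hLseq (by rw [← List.mem_toFinset, hKs]; exact hp)
  have hpairUs : ∀ R ∈ Us.map List.toFinset, ∀ p ∈ R,
      I.mrank p.1 p.2 < I.mrank p.1 (MU p.1) := by
    intro R hR p hp
    obtain ⟨K, hKm, hKs⟩ := List.mem_map.1 hR
    obtain ⟨X, Z, rfl⟩ := List.append_of_mem hKm
    exact SMInst.seq_pair_strict hUsseq (by rw [← List.mem_toFinset, hKs]; exact hp)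
  -- Vs realizes exactly Sup
  have hVs_eq : (Vs.map List.toFinset).toFinset = Sup := by
    apply Finset.ext
    intro R
    rw [List.mem_toFinset]
    constructor
    · intro hR
      rw [hSup R]
      constructor
      · rw [← hLset, List.mem_toFinset]
        exact hVsub1 R hR
      · obtain ⟨K', hK'm, hK's⟩ := List.mem_map.1 (hVsub2 R hR)
        rintro (rfl | hpre)
        · exact hUsne K' hK'm hK's
        · exact hUavoid K' hK'm (hK's ▸ hpre)
    · intro hR
      have hRS : R ∈ S := ((hSup R).1 hR).1
      have hRUs : R ∈ Us.map List.toFinset := hUscon R (Finset.mem_toList.2 hR)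
      by_contra hnot
      have hRLs : R ∈ Ls.map List.toFinset := by
        rw [← hLset, List.mem_toFinset] at hRS
        exact hRS
      have hRDs : R ∈ Ds.map List.toFinset := by
        have := hperm1.mem_iff.2 hRLs
        rw [List.map_append, List.mem_append] at this
        exact this.resolve_left hnot
      obtain ⟨KD, hKDm, hKDs⟩ := List.mem_map.1 hRDs
      obtain ⟨X, Z, rfl⟩ := List.append_of_mem hKDm
      obtain ⟨WX, hseqX, hseqZ⟩ := SMInst.elimseq_split hDsseq
      obtain ⟨WX₁, heKD, -⟩ := hseqZ
      have hlen : 0 < KD.length := lt_of_lt_of_le (by norm_num) heKD.1.1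
      set p := KD.get ⟨0, hlen⟩ with hpdef
      have hpR : p ∈ R := by rw [← hKDs, List.mem_toFinset]; exact SMInst.getm KD _
      have hmatched : WX p.1 = p.2 := heKD.1.matched (SMInst.getm KD _)
      have hmono := SMInst.elimseq_men_mono hseqX p.1
      rw [hmatched] at hmono
      rcases hWcases p.1 with hcase | hcase
      · have := hpairLs R hRLs p hpR
        rw [← hcase] at this
        omega
      · have := hpairUs R hRUs p hpR
        rw [← hcase] at this
        omega
  -- the matching W avoids (m, w)
  have hWm : W m ≠ w := by
    intro hWm
    obtain ⟨K, hKVs, hKprod⟩ := SMInst.produces_of_seq hVsseq hWm h0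
    have hVsne : ∀ K' ∈ Vs, K'.toFinset ≠ Lp.toFinset := by
      intro K' hK' hcc
      have : K'.toFinset ∈ Sup := by
        rw [← hVs_eq, List.mem_toFinset]
        exact List.mem_map.2 ⟨K', hK', rfl⟩
      exact ((hSup _).1 this).2 (Or.inl hcc)
    obtain ⟨NN, hNNst, hNNexp⟩ := hLp
    obtain ⟨Ns, hNsseq⟩ := SMInst.reach hM₀st hNNst (hM₀.2 NN hNNst)
    obtain ⟨ELp, hELp⟩ := SMInst.exists_elim hNNexp
    have hQseq : I.ElimSeq M₀ (Ns ++ [Lp]) ELp :=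
      SMInst.elimseq_append hNsseq ⟨ELp, hELp, rfl⟩
    obtain ⟨X, Z, rfl⟩ := List.append_of_mem hKVs
    obtain ⟨E₁, hseqX, hseqZ⟩ := SMInst.elimseq_split hVsseq
    obtain ⟨E₂, heK, hseqZ2⟩ := hseqZ
    have hE₂m : E₂ m = w := SMInst.partner_after heK hKprod
    have hAseq : I.ElimSeq M₀ (X ++ [K]) E₂ :=
      SMInst.elimseq_append hseqX ⟨E₂, heK, rfl⟩
    obtain ⟨F, hFseq⟩ := SMInst.union_seq hAseq hQseq (SMInst.elimseq_norepeat hQseq)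
    have hLpfil : Lp ∈ (Ns ++ [Lp]).filter
        (fun K' => decide (K'.toFinset ∉ (X ++ [K]).map List.toFinset)) := by
      apply List.mem_filter.2
      refine ⟨List.mem_append_right _ (by simp), ?_⟩
      simp only [decide_eq_true_eq]
      intro hcc
      obtain ⟨K'', hK''m, hK''s⟩ := List.mem_map.1 hcc
      have hK''Vs : K'' ∈ X ++ K :: Z := by
        rcases List.mem_append.1 hK''m with h | h
        · exact List.mem_append_left _ h
        · have : K'' = K := by simpa using h
          subst this
          exact List.mem_append_right _ (List.mem_cons_self)
      exact hVsne K'' hK''Vs hK''s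
    obtain ⟨X₂, Z₂, hfileq⟩ := List.append_of_mem hLpfil
    rw [hfileq] at hFseq
    obtain ⟨E₃, hseqX₂, hseqZ₃⟩ := SMInst.elimseq_split hFseq
    obtain ⟨E₄, heLp2, -⟩ := hseqZ₃
    obtain ⟨i, hi1, hi2⟩ := hprod
    have hE₃m : E₃ m = (Lp.get i).2 := by
      rw [← hi1]
      exact heLp2.1.matched (SMInst.getm Lp i)
    have hcond1 := (heLp2.1.isSucc i).1
    rw [hi1, hi2] at hcond1
    have hmono := SMInst.elimseq_men_mono hseqX₂ m
    rw [hE₂m, hE₃m] at hmono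
    omega
  exact ⟨W, hWst, ⟨Vs, SMInst.elimseq_norepeat hVsseq, hVs_eq, hVsseq⟩, hWm, hWd1⟩
end
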